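/- Let (R,m) be a one-dimensional Cohen–Macaulay local ring and I a regular ideal. Then I is isomorphic to I² as an R-module if and only if I² = xI for some nonzerodivisor x ∈ I. -/

import Mathlib

/-!
An isomorphism `φ : I ≃ I²` is multiplication by the fraction `b / a`, where `a ∈ I` is a
nonzerodivisor and `b = φ a`; thus `a I² = b I`. In the total ring of fractions, the finitely
generated `R`-module `K = (a / b) I` then satisfies `K² = K` and contains the unit `a² / b`.
Nakayama's lemma, applied to `K` as an ideal of the ring `R[K]`, yields `e ∈ K` acting as the
identity on `K`, so `1 ∈ K`. Hence `b = a y` with `y ∈ I`, and cancelling `a` gives `I² = y I`.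
-/

open nonZeroDivisors IsLocalRing Pointwise

namespace Submodule

variable {R A : Type*} [CommRing R] [CommRing A] [Algebra R A]

theorem exists_mul_eq_self_of_fg_of_mul_self_eq {K : Submodule R A} (hfg : K.FG)
    (hK : K * K = K) : ∃ e ∈ K, ∀ k ∈ K, e * k = k := by
  let S := Algebra.adjoin R (K : Set A)
  have hSK : ∀ s ∈ S, ∀ k ∈ K, s * k ∈ K := by
    intro s hs
    induction hs using Algebra.adjoin_induction with
    | mem x hx => exact fun k hk => hK ▸ mul_mem_mul hx hk
    | algebraMap r => exact fun k hk => by rw [← Algebra.smul_def]; exact K.smul_mem r hk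
    | add x y _ _ hx hy => exact fun k hk => by rw [add_mul]; exact K.add_mem (hx k hk) (hy k hk)
    | mul x y _ _ hx hy => exact fun k hk => by rw [mul_assoc]; exact hx _ (hy k hk)
  let J : Ideal S :=
    { carrier := {s | (s : A) ∈ K}
      add_mem' := K.add_mem
      zero_mem' := K.zero_mem
      smul_mem' := fun c s hs => hSK c c.2 s hs }
  have hJK : (J.restrictScalars R).map S.val.toLinearMap = K := by
    ext x
    exact ⟨fun ⟨s, hs, hsx⟩ => hsx ▸ hs, fun hx => ⟨⟨x, Algebra.subset_adjoin hx⟩, hx, rfl⟩⟩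
  have hJfg : J.FG :=
    FG.of_restrictScalars R (fg_of_fg_map_injective _ Subtype.val_injective (hJK ▸ hfg))
  have hJJ : J ≤ J • J := by
    intro s hs
    have hle : K * K ≤ ((J * J).restrictScalars R).map S.val.toLinearMap :=
      mul_le.mpr fun k hk k' hk' =>
        ⟨⟨k, Algebra.subset_adjoin hk⟩ * ⟨k', Algebra.subset_adjoin hk'⟩,
          Ideal.mul_mem_mul hk hk', rfl⟩
    obtain ⟨t, ht, hts⟩ := hle (hK.symm ▸ hs : (s : A) ∈ K * K)
    rwa [Subtype.ext hts] at ht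
  obtain ⟨e, he, hself⟩ := exists_mem_and_smul_eq_self_of_fg_of_le_smul J J hJfg hJJ
  exact ⟨e, he, fun k hk => congrArg Subtype.val (hself ⟨k, Algebra.subset_adjoin hk⟩ hk)⟩

theorem one_mem_of_fg_of_mul_self_eq {K : Submodule R A} (hfg : K.FG) (hK : K * K = K)
    {u : A} (hu : u ∈ K) (hunit : IsUnit u) : (1 : A) ∈ K := by
  obtain ⟨e, he, hself⟩ := exists_mul_eq_self_of_fg_of_mul_self_eq hfg hK
  have he1 : e = 1 := hunit.mul_left_injective (show e * u = 1 * u by rw [hself u hu, one_mul])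
  exact he1 ▸ he

end Submodule

namespace Ideal

variable {R : Type*} [CommRing R]

theorem span_singleton_mul_right_inj_of_mem_nonZeroDivisors {x : R} (hx : x ∈ R⁰)
    {I J : Ideal R} : span {x} * I = span {x} * J ↔ I = J := by
  simp only [le_antisymm_iff, span_singleton_mul_le_span_singleton_mul,
    mul_cancel_left_mem_nonZeroDivisors hx, exists_eq_right']
  rfl

noncomputable def equivSpanSingletonMul {x : R} (hx : x ∈ R⁰) (I : Ideal R) :
    I ≃ₗ[R] (span {x} * I : Ideal R) :=
  (Submodule.equivMapOfInjective (DistribSMul.toLinearMap R R x)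
    (fun _ _ => (mul_cancel_left_mem_nonZeroDivisors hx).mp) I).trans
    (LinearEquiv.ofEq _ _ Submodule.span_singleton_mul.symm)

theorem span_singleton_mul_eq_of_surjective {I J : Ideal R} (φ : I →ₗ[R] J)
    (hφ : Function.Surjective φ) {a : R} (ha : a ∈ I) :
    span {a} * J = span {(φ ⟨a, ha⟩ : R)} * I := by
  have hφa : ∀ y : I, a * φ y = φ ⟨a, ha⟩ * y := by
    intro y
    have hy : a • y = (y : R) • (⟨a, ha⟩ : I) := Subtype.ext (mul_comm _ _)
    have h := congrArg (fun z : I => (φ z : R)) hy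
    simp only [map_smul, Submodule.coe_smul, smul_eq_mul] at h
    rw [h, mul_comm]
  rw [span_singleton_mul_eq_span_singleton_mul]
  refine ⟨fun z hz => ?_, fun y hy => ⟨φ ⟨y, hy⟩, (φ ⟨y, hy⟩).2, hφa ⟨y, hy⟩⟩⟩
  obtain ⟨y, hy⟩ := hφ ⟨z, hz⟩
  exact ⟨y, y.2, by rw [← hφa y, hy]⟩

theorem mem_nonZeroDivisors_of_span_singleton_mul_eq {a b : R} (ha : a ∈ R⁰) {I J : Ideal R}
    {j : R} (hjJ : j ∈ J) (hj : j ∈ R⁰) (h : span {a} * J = span {b} * I) : b ∈ R⁰ := by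
  obtain ⟨y, -, hy⟩ := mem_span_singleton_mul.mp (h ▸ mul_mem_mul (mem_span_singleton_self a) hjJ)
  exact (mul_mem_nonZeroDivisors.mp (hy ▸ mul_mem ha hj)).1

theorem exists_mul_eq_of_span_singleton_mul_sq_eq {I : Ideal R} (hI : I.FG) {a b : R}
    (ha : a ∈ R⁰) (haI : a ∈ I) (hb : b ∈ R⁰) (h : span {a} * I ^ 2 = span {b} * I) :
    ∃ y ∈ I, a * y = b := by
  let Q := FractionRing R
  let f := algebraMap R Q
  have hspan_mul (x y : Q) : (R ∙ x) * (R ∙ y) = R ∙ (x * y) := by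
    rw [Submodule.span_mul_span, Set.singleton_mul_singleton]
  have hspan_map (x : R) :
      Submodule.map (Algebra.ofId R Q).toLinearMap (span {x}) = R ∙ f x := by
    rw [span, Submodule.map_span, Set.image_singleton]; rfl
  let J : Submodule R Q := Submodule.map (Algebra.ofId R Q).toLinearMap I
  have hJ : (R ∙ f a) * J ^ 2 = (R ∙ f b) * J := by
    have hmap := congrArg (Submodule.map (Algebra.ofId R Q).toLinearMap) h
    rwa [Submodule.map_mul, Submodule.map_pow, Submodule.map_mul, hspan_map, hspan_map] at hmap
  let β : Q := IsLocalization.mk' Q 1 ⟨b, hb⟩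
  have hβ : β * f b = 1 := by rw [IsLocalization.mk'_spec, map_one]
  let K := (R ∙ β) * (R ∙ f a) * J
  have hKK : K * K = K :=
    calc K * K = (R ∙ β) * (R ∙ β) * (R ∙ f a) * ((R ∙ f a) * J ^ 2) := by ring
      _ = (R ∙ β) * (R ∙ β) * (R ∙ f a) * ((R ∙ f b) * J) := by rw [hJ]
      _ = (R ∙ β * f b) * K := by rw [← hspan_mul]; ring
      _ = K := by rw [hβ, ← Submodule.one_eq_span, one_mul]
  have hu : β * f a * f a ∈ K := Submodule.mul_mem_mul
    (Submodule.mul_mem_mul (Submodule.mem_span_singleton_self β)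
      (Submodule.mem_span_singleton_self _)) (Submodule.mem_map_of_mem haI)
  have hunit : IsUnit (β * f a * f a) :=
    have hfa : IsUnit (f a) := IsLocalization.map_units Q ⟨a, ha⟩
    ((IsUnit.of_mul_eq_one _ hβ).mul hfa).mul hfa
  have hKfg : K.FG := ((Submodule.fg_span_singleton _).mul
    (Submodule.fg_span_singleton _)).mul (Submodule.FG.map _ hI)
  have h1 := Submodule.one_mem_of_fg_of_mul_self_eq hKfg hKK hu hunit
  change 1 ∈ (R ∙ β) * (R ∙ f a) * J at h1
  rw [hspan_mul, Submodule.mem_span_singleton_mul] at h1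
  obtain ⟨_, ⟨y, hy, rfl⟩, hy1⟩ := h1
  refine ⟨y, hy, IsFractionRing.injective R Q ?_⟩
  change f (a * y) = f b
  change β * f a * f y = 1 at hy1
  rw [map_mul]
  linear_combination (-(f a * f y)) * hβ + f b * hy1

end Ideal

theorem iso_sq_iff_stable (R : Type*) [CommRing R] [IsNoetherianRing R]
    (I : Ideal R) (hreg : ∃ x ∈ I, x ∈ R⁰) :
    Nonempty (I ≃ₗ[R] (I ^ 2 : Ideal R)) ↔
      ∃ x ∈ I, x ∈ R⁰ ∧ I ^ 2 = Ideal.span {x} * I := by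
  constructor
  · rintro ⟨φ⟩
    obtain ⟨a, haI, ha⟩ := hreg
    have hab := Ideal.span_singleton_mul_eq_of_surjective φ.toLinearMap φ.surjective haI
    have hb := Ideal.mem_nonZeroDivisors_of_span_singleton_mul_eq ha
      (Ideal.pow_mem_pow haI 2) (pow_mem ha 2) hab
    obtain ⟨y, hyI, hy⟩ := Ideal.exists_mul_eq_of_span_singleton_mul_sq_eq
      (IsNoetherian.noetherian I) ha haI hb hab
    refine ⟨y, hyI, (mul_mem_nonZeroDivisors.mp (hy ▸ hb)).2, ?_⟩
    rwa [← hy, ← Ideal.span_singleton_mul_span_singleton, mul_assoc,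
      Ideal.span_singleton_mul_right_inj_of_mem_nonZeroDivisors ha] at hab
  · rintro ⟨x, -, hx, hI⟩
    exact ⟨(Ideal.equivSpanSingletonMul hx I).trans (LinearEquiv.ofEq _ _ hI.symm)⟩
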